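/- Let d ≥ 1, σ > 0, and let P be a Borel probability measure on ℝ^d with finite (2d+ε) moments for some ε > 0, i.e., E[‖X‖^{2d+ε}] < ∞ for X ~ P. Then ∫_{ℝ^d} √(Var_P(φ_σ(x−·))) dx < ∞. -/

import Mathlib

open MeasureTheory ProbabilityTheory Real Filter
open scoped ENNReal NNReal

/-- The isotropic Gaussian density `φ_σ` on `ℝ^d`. -/
noncomputable def gaussDensity (d : ℕ) (σ : ℝ) (x : EuclideanSpace ℝ (Fin d)) : ℝ :=
  (2 * π * σ ^ 2) ^ (-(d : ℝ) / 2) * Real.exp (-‖x‖ ^ 2 / (2 * σ ^ 2))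

/-
Write `g_x(y) = φ_σ(x - y)`. Since `Var ≤ E[g_x²]`, splitting according to whether
`‖Y‖ ≤ ‖x‖/2` (then `‖x - Y‖ ≥ ‖x‖/2`, so `g_x(Y) ≤ φ_σ(x/2)`) gives
`√Var_P(g_x) ≤ φ_σ(x/2) + φ_σ(0) √P(‖Y‖ > ‖x‖/2)`.
The first term is integrable in `x`. By Markov's inequality the tail probability is
`O((1 + ‖x‖)^{-(2d+ε)})`, so its square root is `O((1 + ‖x‖)^{-(d+ε/2)})`, integrable on `ℝ^d`.
-/

theorem sqrt_variance_le_add_mul_sqrt_measureReal {Ω : Type*} [MeasurableSpace Ω]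
    {μ : Measure Ω} [IsProbabilityMeasure μ] {X : Ω → ℝ} (hX : AEStronglyMeasurable X μ)
    {s : Set Ω} (hs : MeasurableSet s) {a b : ℝ} (ha : 0 ≤ a) (hb : 0 ≤ b)
    (hXa : ∀ ω ∉ s, |X ω| ≤ a) (hXb : ∀ ω, |X ω| ≤ b) :
    √(variance X μ) ≤ a + b * √(μ.real s) := by
  have hbound : X ^ 2 ≤ fun ω => a ^ 2 + s.indicator (fun _ => b ^ 2) ω := by
    intro ω
    by_cases hω : ω ∈ s
    · simp only [Pi.pow_apply, Set.indicator_of_mem hω]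
      nlinarith [sq_abs (X ω), hXb ω, abs_nonneg (X ω)]
    · simp only [Pi.pow_apply, Set.indicator_of_notMem hω, add_zero]
      nlinarith [sq_abs (X ω), hXa ω hω, abs_nonneg (X ω)]
  have hint : Integrable (fun ω => a ^ 2 + s.indicator (fun _ => b ^ 2) ω) μ :=
    (integrable_const _).add ((integrable_const _).indicator hs)
  have hsq : μ[X ^ 2] ≤ a ^ 2 + b ^ 2 * μ.real s :=
    calc μ[X ^ 2] ≤ ∫ ω, a ^ 2 + s.indicator (fun _ => b ^ 2) ω ∂μ :=
          integral_mono_of_nonneg (f := X ^ 2) (ae_of_all _ fun ω => sq_nonneg (X ω)) hint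
            (ae_of_all _ hbound)
      _ = a ^ 2 + b ^ 2 * μ.real s := by
          rw [integral_add (integrable_const _) ((integrable_const _).indicator hs),
            integral_indicator_const _ hs]
          simp [mul_comm]
  rw [Real.sqrt_le_iff]
  refine ⟨by positivity, ?_⟩
  calc variance X μ ≤ μ[X ^ 2] := variance_le_expectation_sq hX
    _ ≤ a ^ 2 + b ^ 2 * μ.real s := hsq
    _ ≤ (a + b * √(μ.real s)) ^ 2 := by
        nlinarith [Real.sq_sqrt (measureReal_nonneg (μ := μ) (s := s)),
          mul_nonneg (mul_nonneg ha hb) (Real.sqrt_nonneg (μ.real s))]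

section Tail

variable {F : Type*} [NormedAddCommGroup F] [MeasurableSpace F] {ν : Measure F}
  [IsProbabilityMeasure ν]

theorem exists_measureReal_norm_gt_le_mul_one_add_rpow_neg {p : ℝ} (hp : 0 ≤ p)
    (hmom : Integrable (fun y => ‖y‖ ^ p) ν) :
    ∃ C, ∀ r, 0 ≤ r → ν.real {y | r < ‖y‖} ≤ C * (1 + r) ^ (-p) := by
  set M := ∫ y, ‖y‖ ^ p ∂ν
  have hM : 0 ≤ M := integral_nonneg fun y => by positivity
  refine ⟨max 1 M * 2 ^ p, fun r hr => ?_⟩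
  rcases lt_or_ge r 1 with hr1 | hr1
  · calc ν.real {y | r < ‖y‖} ≤ 1 := measureReal_le_one
      _ = 2 ^ p * 2 ^ (-p) := by rw [← rpow_add two_pos]; simp
      _ ≤ 2 ^ p * (1 + r) ^ (-p) :=
          mul_le_mul_of_nonneg_left
            (rpow_le_rpow_of_nonpos (by positivity) (by linarith) (by linarith)) (by positivity)
      _ ≤ max 1 M * 2 ^ p * (1 + r) ^ (-p) := by
          rw [mul_assoc]; exact le_mul_of_one_le_left (by positivity) (le_max_left _ _)
  · have hr0 : 0 < r := by linarith
    have markov : r ^ p * ν.real {y | r ^ p ≤ ‖y‖ ^ p} ≤ M :=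
      mul_meas_ge_le_integral_of_nonneg (ae_of_all _ fun y => by positivity) hmom _
    calc ν.real {y | r < ‖y‖} ≤ ν.real {y | r ^ p ≤ ‖y‖ ^ p} :=
          measureReal_mono fun y hy => rpow_le_rpow hr (le_of_lt hy) hp
      _ ≤ M * r ^ (-p) := by
          rw [rpow_neg hr, ← div_eq_mul_inv, le_div_iff₀ (by positivity)]; linarith
      _ = M * 2 ^ p * (2 * r) ^ (-p) := by
          rw [mul_rpow zero_le_two hr, rpow_neg zero_le_two, rpow_neg hr]
          field_simp
      _ ≤ M * 2 ^ p * (1 + r) ^ (-p) :=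
          mul_le_mul_of_nonneg_left
            (rpow_le_rpow_of_nonpos (by positivity) (by linarith) (by linarith)) (by positivity)
      _ ≤ max 1 M * 2 ^ p * (1 + r) ^ (-p) := by gcongr; exact le_max_right _ _

theorem integrable_sqrt_measureReal_norm_gt {E : Type*} [NormedAddCommGroup E] [NormedSpace ℝ E]
    [FiniteDimensional ℝ E] [MeasurableSpace E] [BorelSpace E] (μ : Measure E)
    [μ.IsAddHaarMeasure] {p : ℝ} (hp : 2 * (Module.finrank ℝ E : ℝ) < p)
    (hmom : Integrable (fun y => ‖y‖ ^ p) ν) :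
    Integrable (fun x => √(ν.real {y | ‖x‖ < ‖y‖})) μ := by
  have hp0 : 0 ≤ p := by linarith [(Nat.cast_nonneg _ : (0 : ℝ) ≤ Module.finrank ℝ E)]
  obtain ⟨C, hC⟩ := exists_measureReal_norm_gt_le_mul_one_add_rpow_neg hp0 hmom
  have htail_anti : Antitone fun r : ℝ => ν.real {y | r < ‖y‖} :=
    fun r s hrs => measureReal_mono fun y (hy : s < ‖y‖) => lt_of_le_of_lt hrs hy
  refine ((integrable_one_add_norm (r := p / 2) (by linarith)).const_mul √C).mono'
    (htail_anti.measurable.comp measurable_norm).sqrt.aestronglyMeasurable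
    (ae_of_all _ fun x => ?_)
  rw [Real.norm_of_nonneg (sqrt_nonneg _)]
  calc √(ν.real {y | ‖x‖ < ‖y‖}) ≤ √(C * (1 + ‖x‖) ^ (-p)) :=
        sqrt_le_sqrt (hC _ (norm_nonneg x))
    _ = √C * (1 + ‖x‖) ^ (-(p / 2)) := by
        rw [sqrt_mul' _ (by positivity), sqrt_eq_rpow ((1 + ‖x‖) ^ (-p)),
          ← rpow_mul (by positivity)]
        ring_nf

end Tail

section GaussDensity

variable {d : ℕ} {σ : ℝ}

theorem gaussDensity_nonneg (x : EuclideanSpace ℝ (Fin d)) : 0 ≤ gaussDensity d σ x := by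
  unfold gaussDensity; positivity

theorem gaussDensity_le_of_norm_le {x y : EuclideanSpace ℝ (Fin d)} (h : ‖x‖ ≤ ‖y‖) :
    gaussDensity d σ y ≤ gaussDensity d σ x := by
  unfold gaussDensity; gcongr

theorem continuous_gaussDensity : Continuous (gaussDensity d σ) := by
  unfold gaussDensity; fun_prop

theorem integrable_gaussDensity (hσ : σ ≠ 0) : Integrable (gaussDensity d σ) := by
  have h := (GaussianFourier.integrable_cexp_neg_mul_sq_norm_add (V := EuclideanSpace ℝ (Fin d))
    (b := ((2 * σ ^ 2)⁻¹ : ℝ)) (by rw [Complex.ofReal_re]; positivity) 0 0).norm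
  refine (h.const_mul ((2 * π * σ ^ 2) ^ (-(d : ℝ) / 2))).congr (ae_of_all _ fun x => ?_)
  have hre : (-(((2 * σ ^ 2)⁻¹ : ℝ) : ℂ) * (‖x‖ : ℂ) ^ 2
      + 0 * ((inner ℝ (0 : EuclideanSpace ℝ (Fin d)) x : ℝ) : ℂ)).re = -‖x‖ ^ 2 / (2 * σ ^ 2) := by
    rw [zero_mul, add_zero, ← Complex.ofReal_pow, ← Complex.ofReal_neg, ← Complex.ofReal_mul,
      Complex.ofReal_re]
    ring
  simp only [Complex.norm_exp, hre, gaussDensity]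

theorem sqrt_variance_gaussDensity_sub_le (P : Measure (EuclideanSpace ℝ (Fin d)))
    [IsProbabilityMeasure P] (x : EuclideanSpace ℝ (Fin d)) :
    √(variance (fun y => gaussDensity d σ (x - y)) P) ≤ gaussDensity d σ ((2 : ℝ)⁻¹ • x)
      + gaussDensity d σ 0 * √(P.real {y | ‖(2 : ℝ)⁻¹ • x‖ < ‖y‖}) := by
  have hhalf : ‖(2 : ℝ)⁻¹ • x‖ = ‖x‖ / 2 := by rw [norm_smul]; norm_num; ring
  refine sqrt_variance_le_add_mul_sqrt_measureReal (X := fun y => gaussDensity d σ (x - y))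
    (continuous_gaussDensity.comp (continuous_const.sub continuous_id)).aestronglyMeasurable
    (measurableSet_lt measurable_const measurable_norm) (gaussDensity_nonneg _)
    (gaussDensity_nonneg _) (fun y hy => ?_) (fun y => ?_)
  · rw [abs_of_nonneg (gaussDensity_nonneg _)]
    refine gaussDensity_le_of_norm_le ?_
    have := norm_sub_norm_le x y
    simp only [Set.mem_ofPred_eq, not_lt] at hy
    linarith
  · rw [abs_of_nonneg (gaussDensity_nonneg _)]
    exact gaussDensity_le_of_norm_le (by simp)

end GaussDensity

theorem sqrt_variance_integral_finite_of_moments_general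
    (d : ℕ) (σ : ℝ) (hσ : 0 < σ)
    (P : Measure (EuclideanSpace ℝ (Fin d))) [IsProbabilityMeasure P]
    (ε : ℝ) (hε : 0 < ε)
    (hmom : ∫⁻ y, ENNReal.ofReal (‖y‖ ^ (2 * (d : ℝ) + ε)) ∂P < ⊤) :
    ∫⁻ x, ENNReal.ofReal
        (Real.sqrt (variance (fun y => gaussDensity d σ (x - y)) P)) < ⊤ := by
  have hmom' : Integrable (fun y => ‖y‖ ^ (2 * (d : ℝ) + ε)) P :=
    (lintegral_ofReal_ne_top_iff_integrable (by fun_prop (disch := positivity))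
      (ae_of_all _ fun y => by positivity)).mp hmom.ne
  have htail := integrable_sqrt_measureReal_norm_gt (volume : Measure (EuclideanSpace ℝ (Fin d)))
    (by rw [finrank_euclideanSpace_fin]; linarith) hmom'
  have hbound : Integrable fun x : EuclideanSpace ℝ (Fin d) => gaussDensity d σ ((2 : ℝ)⁻¹ • x)
      + gaussDensity d σ 0 * √(P.real {y | ‖(2 : ℝ)⁻¹ • x‖ < ‖y‖}) :=
    ((integrable_gaussDensity hσ.ne').add (htail.const_mul _)).comp_smul (by norm_num)
  exact (lintegral_mono fun x => ENNReal.ofReal_le_ofReal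
    (sqrt_variance_gaussDensity_sub_le P x)).trans_lt hbound.lintegral_lt_top

/-- **Sufficient condition via moments:** if `P` has finite `(2d+ε)`-th moment for some
`ε > 0`, then `∫ √(Var_P(φ_σ(x−·))) dx < ∞`. -/
theorem sqrt_variance_integral_finite_of_moments
    (d : ℕ) (hd : 1 ≤ d) (σ : ℝ) (hσ : 0 < σ)
    (P : Measure (EuclideanSpace ℝ (Fin d))) [IsProbabilityMeasure P]
    (ε : ℝ) (hε : 0 < ε)
    (hmom : ∫⁻ y, ENNReal.ofReal (‖y‖ ^ (2 * (d : ℝ) + ε)) ∂P < ⊤) :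
    ∫⁻ x, ENNReal.ofReal
        (Real.sqrt (variance (fun y => gaussDensity d σ (x - y)) P)) < ⊤ :=
  sqrt_variance_integral_finite_of_moments_general d σ hσ P ε hε hmom
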